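/- arXiv:math/9912149 — 5 statements merged into one kernel-verified Lean document; each statement's English description precedes it below -/
import Mathlib

section
/- Let λ_1 < ⋯ < λ_N be positive integers all exceeding 10. Then there exists a point x_0 ∈ [2π/3, 5π/6] such that ∑_{j=1}^N |sin(λ_j x_0)| ≥ cN for an absolute constant c > 0 (e.g. c = 1/10). -/
open Real

lemma key_integral (n : ℕ) (hn : 11 ≤ n) :
    π/60 ≤ ∫ x in (2*π/3)..(5*π/6), |Real.sin (n * x)| := by
  have hnR : (11:ℝ) ≤ n := by exact_mod_cast hn
  have hn0 : (0:ℝ) < n := by linarith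
  have hpi : 0 < π := Real.pi_pos
  have hab : 2*π/3 ≤ 5*π/6 := by linarith
  -- |sin t| ≥ sin t ^ 2
  have hpt : ∀ x : ℝ, Real.sin ((n:ℝ) * x) ^ 2 ≤ |Real.sin (n * x)| := by
    intro x
    have h1 : |Real.sin ((n:ℝ) * x)| ≤ 1 := abs_sin_le_one _
    calc Real.sin ((n:ℝ) * x) ^ 2 = |Real.sin ((n:ℝ) * x)| ^ 2 := (sq_abs _).symm
      _ ≤ |Real.sin ((n:ℝ) * x)| ^ 1 :=
          pow_le_pow_of_le_one (abs_nonneg _) h1 (by norm_num)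
      _ = |Real.sin ((n:ℝ) * x)| := pow_one _
  have hint1 : IntervalIntegrable (fun x => Real.sin ((n:ℝ) * x) ^ 2)
      MeasureTheory.volume (2*π/3) (5*π/6) :=
    (Continuous.intervalIntegrable (by fun_prop) _ _)
  have hint2 : IntervalIntegrable (fun x => |Real.sin ((n:ℝ) * x)|)
      MeasureTheory.volume (2*π/3) (5*π/6) :=
    (Continuous.intervalIntegrable (by fun_prop) _ _)
  have hmono := intervalIntegral.integral_mono_on hab hint1 hint2
    (fun x _ => hpt x)
  -- compute ∫ sin(nx)^2
  have hsq : ∀ x : ℝ, Real.sin ((n:ℝ) * x) ^ 2 = 1/2 - Real.cos (2*(n:ℝ) * x) / 2 := by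
    intro x
    have := Real.cos_sq ((n:ℝ) * x)
    have h2 : (2:ℝ) * ((n:ℝ) * x) = 2*(n:ℝ) * x := by ring
    have hs := Real.sin_sq_eq_half_sub ((n:ℝ) * x)
    rw [hs, h2]
  have hcval : ∫ x in (2*π/3)..(5*π/6), Real.cos (2*(n:ℝ) * x)
      = (2*(n:ℝ))⁻¹ * (Real.sin (2*(n:ℝ)*(5*π/6)) - Real.sin (2*(n:ℝ)*(2*π/3))) := by
    rw [intervalIntegral.integral_comp_mul_left (fun x => Real.cos x) (by positivity : (2*(n:ℝ)) ≠ 0)]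
    rw [integral_cos]
    simp [smul_eq_mul]
  have hcbound : |∫ x in (2*π/3)..(5*π/6), Real.cos (2*(n:ℝ) * x)| ≤ 1/(n:ℝ) := by
    rw [hcval, abs_mul]
    have h1 : |(2*(n:ℝ))⁻¹| = (2*(n:ℝ))⁻¹ := abs_of_pos (by positivity)
    have h2 : |Real.sin (2*(n:ℝ)*(5*π/6)) - Real.sin (2*(n:ℝ)*(2*π/3))| ≤ 2 := by
      calc |Real.sin (2*(n:ℝ)*(5*π/6)) - Real.sin (2*(n:ℝ)*(2*π/3))|
          ≤ |Real.sin (2*(n:ℝ)*(5*π/6))| + |Real.sin (2*(n:ℝ)*(2*π/3))| := abs_sub _ _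
        _ ≤ 1 + 1 := add_le_add (abs_sin_le_one _) (abs_sin_le_one _)
        _ = 2 := by norm_num
    rw [h1]
    calc (2*(n:ℝ))⁻¹ * |Real.sin (2*(n:ℝ)*(5*π/6)) - Real.sin (2*(n:ℝ)*(2*π/3))|
        ≤ (2*(n:ℝ))⁻¹ * 2 := by
          apply mul_le_mul_of_nonneg_left h2 (by positivity)
      _ = 1/(n:ℝ) := by field_simp
  have hsqval : ∫ x in (2*π/3)..(5*π/6), Real.sin ((n:ℝ) * x) ^ 2
      = π/12 - (∫ x in (2*π/3)..(5*π/6), Real.cos (2*(n:ℝ) * x)) / 2 := by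
    have : (fun x => Real.sin ((n:ℝ) * x) ^ 2)
        = fun x => 1/2 - Real.cos (2*(n:ℝ) * x) / 2 := funext hsq
    rw [this]
    have hic : IntervalIntegrable (fun x => Real.cos (2*(n:ℝ) * x) / 2)
        MeasureTheory.volume (2*π/3) (5*π/6) :=
      (Continuous.intervalIntegrable (by fun_prop) _ _)
    have hconst : IntervalIntegrable (fun _ : ℝ => (1:ℝ)/2)
        MeasureTheory.volume (2*π/3) (5*π/6) := intervalIntegrable_const
    rw [intervalIntegral.integral_sub hconst hic]
    rw [intervalIntegral.integral_const]
    rw [intervalIntegral.integral_div]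
    simp only [smul_eq_mul]
    ring_nf
  have hlow : π/12 - 1/22 ≤ ∫ x in (2*π/3)..(5*π/6), Real.sin ((n:ℝ) * x) ^ 2 := by
    rw [hsqval]
    have h1 : (∫ x in (2*π/3)..(5*π/6), Real.cos (2*(n:ℝ) * x)) / 2 ≤ 1/(2*(n:ℝ)) := by
      have := (abs_le.mp hcbound).2
      rw [show (1:ℝ)/(2*(n:ℝ)) = (1/(n:ℝ))/2 by ring]
      linarith
    have h2 : 1/(2*(n:ℝ)) ≤ 1/22 := by
      apply div_le_div_of_nonneg_left (by norm_num) (by norm_num) (by linarith)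
    linarith
  have hfinal : π/60 ≤ π/12 - 1/22 := by
    have : (3.141592:ℝ) ≤ π := by
      have := Real.pi_gt_d6; linarith
    nlinarith
  linarith

theorem exists_point_abs_sin_sum_large (N : ℕ) (lam : Fin N → ℕ)
    (hmono : StrictMono lam) (hbig : ∀ j, 10 < lam j) :
    ∃ x₀ ∈ Set.Icc (2*π/3) (5*π/6),
      (∑ j, |Real.sin (lam j * x₀)|) ≥ (1/10) * N := by
  have hpi : 0 < π := Real.pi_pos
  have hab : 2*π/3 ≤ 5*π/6 := by linarith
  set f : ℝ → ℝ := fun x => ∑ j, |Real.sin (lam j * x)| with hf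
  have hcont : Continuous f := by
    apply continuous_finset_sum
    intro j _
    fun_prop
  obtain ⟨x₀, hx₀, hmax⟩ := (isCompact_Icc (a := 2*π/3) (b := 5*π/6)).exists_isMaxOn
    (Set.nonempty_Icc.mpr hab) hcont.continuousOn
  refine ⟨x₀, hx₀, ?_⟩
  have hintf : ∀ j : Fin N, IntervalIntegrable (fun x => |Real.sin ((lam j : ℝ) * x)|)
      MeasureTheory.volume (2*π/3) (5*π/6) :=
    fun j => (Continuous.intervalIntegrable (by fun_prop) _ _)
  have hIf : IntervalIntegrable f MeasureTheory.volume (2*π/3) (5*π/6) :=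
    hcont.intervalIntegrable _ _
  have hsum : ∫ x in (2*π/3)..(5*π/6), f x
      = ∑ j, ∫ x in (2*π/3)..(5*π/6), |Real.sin ((lam j : ℝ) * x)| := by
    exact intervalIntegral.integral_finset_sum (fun j _ => hintf j)
  have hlb : (N : ℝ) * (π/60) ≤ ∫ x in (2*π/3)..(5*π/6), f x := by
    rw [hsum]
    have := Finset.card_nsmul_le_sum Finset.univ
      (fun j : Fin N => ∫ x in (2*π/3)..(5*π/6), |Real.sin ((lam j : ℝ) * x)|)
      (π/60) (fun j _ => key_integral (lam j) (hbig j))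
    simpa [nsmul_eq_mul] using this
  have hub : ∫ x in (2*π/3)..(5*π/6), f x ≤ (π/6) * f x₀ := by
    have h1 : ∫ x in (2*π/3)..(5*π/6), f x ≤ ∫ _x in (2*π/3)..(5*π/6), f x₀ :=
      intervalIntegral.integral_mono_on hab hIf intervalIntegrable_const
        (fun x hx => hmax hx)
    rw [intervalIntegral.integral_const] at h1
    have : (5*π/6 - 2*π/3) = π/6 := by ring
    rw [this, smul_eq_mul] at h1
    exact h1
  have : (N : ℝ) * (π/60) ≤ (π/6) * f x₀ := le_trans hlb hub
  have hge : (1/10 : ℝ) * N ≤ f x₀ := by nlinarith [hpi, this]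
  exact hge
end

section
/- Let λ_1 < ⋯ < λ_N be positive integers greater than 10, and suppose M_1 := max_{0≤x≤2π} |∑_{j=1}^N sin(λ_j x)| ≤ N/100. Then there exist signs ε_1, …, ε_N ∈ {−1, +1} such that max_{0≤x≤2π} |∑_{j=1}^N sin((λ_j + ε_j)x)| ≥ cN for an absolute constant c > 0 (e.g. c = 1/20). -/
/-!
Replacing `λ` by `λ + ε` with `ε = ±1` turns `sin (λ x)` into `sin (λ x) cos x + ε cos (λ x) sin x`.
Choosing `ε_j` to be the sign of `cos (λ_j x)` makes the second part
`sin x ∑ |cos (λ_j x)| ≥ sin x ∑ cos² (λ_j x)`. For `λ ≥ 11`, `cos² (λ x)` averages nearly `1/2`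
over `[π/6, π/2]`, so at some point of that interval, where `sin x ≥ 1/2`, the second part is at
least `N/8`, while the first is at most `M_1 ≤ N/100` in absolute value.
-/

open Real Finset

lemma sub_inv_le_integral_cos_mul_sq {c : ℝ} (hc : 0 < c) (a b : ℝ) :
    (b - a) / 2 - c⁻¹ ≤ ∫ x in a..b, cos (c * x) ^ 2 := by
  have hcs : ∀ u : ℝ, |cos u * sin u| ≤ 1 := fun u => by
    rw [abs_mul]; exact mul_le_one₀ (abs_cos_le_one u) (abs_nonneg _) (abs_sin_le_one u)
  have hb := abs_le.mp (hcs (c * b))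
  have ha := abs_le.mp (hcs (c * a))
  rw [intervalIntegral.integral_comp_mul_left (fun u => cos u ^ 2) hc.ne', integral_cos_sq,
    smul_eq_mul]
  calc (b - a) / 2 - c⁻¹ = c⁻¹ * ((-2 + c * b - c * a) / 2) := by field_simp; ring
    _ ≤ _ := by gcongr; linarith

lemma exists_mem_Icc_integral_le_mul {f : ℝ → ℝ} {a b : ℝ} (hab : a ≤ b)
    (hf : ContinuousOn f (Set.Icc a b)) :
    ∃ x ∈ Set.Icc a b, ∫ t in a..b, f t ≤ (b - a) * f x := by
  obtain ⟨x, hx, hmax⟩ := isCompact_Icc.exists_isMaxOn (Set.nonempty_Icc.2 hab) hf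
  refine ⟨x, hx, ?_⟩
  calc ∫ t in a..b, f t ≤ ∫ _ in a..b, f x :=
        intervalIntegral.integral_mono_on hab (hf.intervalIntegrable_of_Icc hab)
          intervalIntegrable_const hmax
    _ = (b - a) * f x := by rw [intervalIntegral.integral_const, smul_eq_mul]

lemma exists_mem_Icc_card_mul_le_sum_cos_sq {ι : Type*} (s : Finset ι) (μ : ι → ℝ)
    {c : ℝ} (hc : 0 < c) (hμ : ∀ j ∈ s, c ≤ μ j) {a b : ℝ} (hab : a ≤ b) :
    ∃ x ∈ Set.Icc a b, #s * ((b - a) / 2 - c⁻¹) ≤ (b - a) * ∑ j ∈ s, cos (μ j * x) ^ 2 := by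
  have hcont : ∀ j, Continuous fun x => cos (μ j * x) ^ 2 := fun j => by fun_prop
  obtain ⟨x, hx, hle⟩ := exists_mem_Icc_integral_le_mul hab
    (continuous_finsetSum s fun j _ => hcont j).continuousOn
  refine ⟨x, hx, le_trans ?_ hle⟩
  rw [intervalIntegral.integral_finsetSum fun j _ => (hcont j).intervalIntegrable a b,
    ← nsmul_eq_mul, ← sum_const]
  refine sum_le_sum fun j hj =>
    le_trans ?_ (sub_inv_le_integral_cos_mul_sq (hc.trans_le (hμ j hj)) a b)
  gcongr
  exact hμ j hj

lemma sin_add_mul_of_eq_one_or_eq_neg_one {e : ℝ} (he : e = 1 ∨ e = -1) (a x : ℝ) :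
    sin ((a + e) * x) = sin (a * x) * cos x + e * cos (a * x) * sin x := by
  rcases he with rfl | rfl
  · rw [add_mul, one_mul, sin_add]; ring
  · rw [add_mul, neg_one_mul, ← sub_eq_add_neg, sin_sub]; ring

/-- A sign in `{1, -1}` for `t`; unlike `SignType.sign`, it is never `0`. -/
noncomputable def signPM (t : ℝ) : ℤ := if 0 ≤ t then 1 else -1

lemma signPM_eq_one_or_eq_neg_one (t : ℝ) : signPM t = 1 ∨ signPM t = -1 := by
  unfold signPM; split_ifs <;> simp

lemma sq_le_signPM_mul_self {t : ℝ} (ht : |t| ≤ 1) : t ^ 2 ≤ signPM t * t := by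
  have := abs_le.mp ht
  unfold signPM
  split_ifs with h
  · push_cast; nlinarith
  · push_cast; nlinarith

lemma sum_sin_mul_cos_add_sin_mul_sum_cos_sq_le {ι : Type*} (s : Finset ι) (μ : ι → ℝ)
    {x : ℝ} (hx : 0 ≤ sin x) :
    (∑ j ∈ s, sin (μ j * x)) * cos x + sin x * ∑ j ∈ s, cos (μ j * x) ^ 2 ≤
      ∑ j ∈ s, sin ((μ j + signPM (cos (μ j * x))) * x) := by
  rw [sum_mul, mul_sum, ← sum_add_distrib]
  refine sum_le_sum fun j _ => ?_
  have hε : (signPM (cos (μ j * x)) : ℝ) = 1 ∨ (signPM (cos (μ j * x)) : ℝ) = -1 := by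
    exact_mod_cast signPM_eq_one_or_eq_neg_one _
  rw [sin_add_mul_of_eq_one_or_eq_neg_one hε]
  have := mul_le_mul_of_nonneg_left (sq_le_signPM_mul_self (abs_cos_le_one (μ j * x))) hx
  linarith

theorem perturbed_sin_sum_large_general (N : ℕ) (lam : Fin N → ℕ)
    (hbig : ∀ j, 10 < lam j)
    (hsmall : ∀ x ∈ Set.Icc (0:ℝ) (2*π),
      |∑ j, Real.sin ((lam j : ℝ) * x)| ≤ (N : ℝ)/100) :
    ∃ ε : Fin N → ℤ, (∀ j, ε j = 1 ∨ ε j = -1) ∧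
      ∃ x ∈ Set.Icc (0:ℝ) (2*π),
        |∑ j, Real.sin ((((lam j : ℤ) + ε j : ℤ) : ℝ) * x)| ≥ (1/20) * N := by
  have hπ := pi_gt_three
  obtain ⟨x, ⟨hx₁, hx₂⟩, hmean⟩ :=
    exists_mem_Icc_card_mul_le_sum_cos_sq univ (fun j => (lam j : ℝ)) (by norm_num : (0 : ℝ) < 11)
      (fun j _ => by exact_mod_cast hbig j) (by linarith : π / 6 ≤ π / 2)
  rw [card_univ, Fintype.card_fin] at hmean
  have hsin : 1 / 2 ≤ sin x := by
    simpa [sin_pi_div_six] using sin_le_sin_of_le_of_le_pi_div_two (by linarith) hx₂ hx₁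
  have hS := abs_le.mp (hsmall x ⟨by linarith, by linarith⟩)
  have hperturb := sum_sin_mul_cos_add_sin_mul_sum_cos_sq_le univ (fun j => (lam j : ℝ))
    (by linarith : 0 ≤ sin x)
  refine ⟨fun j => signPM (cos (lam j * x)), fun j => signPM_eq_one_or_eq_neg_one _,
    x, ⟨by linarith, by linarith⟩, le_abs.mpr (Or.inl ?_)⟩
  push_cast
  set G := ∑ j, cos (lam j * x) ^ 2
  have hG : (N : ℝ) / 4 ≤ G := by
    have hN : (0 : ℝ) ≤ N := N.cast_nonneg
    nlinarith
  have hSG : -(N : ℝ) / 100 ≤ (∑ j, sin (lam j * x)) * cos x := by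
    have := abs_le.mp (abs_cos_le_one x)
    nlinarith
  nlinarith

theorem perturbed_sin_sum_large (N : ℕ) (lam : Fin N → ℕ)
    (hmono : StrictMono lam) (hbig : ∀ j, 10 < lam j)
    (hsmall : ∀ x ∈ Set.Icc (0:ℝ) (2*π),
      |∑ j, Real.sin ((lam j : ℝ) * x)| ≤ (N : ℝ)/100) :
    ∃ ε : Fin N → ℤ, (∀ j, ε j = 1 ∨ ε j = -1) ∧
      ∃ x ∈ Set.Icc (0:ℝ) (2*π),
        |∑ j, Real.sin ((((lam j : ℤ) + ε j : ℤ) : ℝ) * x)| ≥ (1/20) * N :=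
  perturbed_sin_sum_large_general N lam hbig hsmall
end

section
/- Let λ_1 < ⋯ < λ_N be positive integers greater than 10, and assume |∑_{j=1}^N cos(λ_j x)| ≤ N/100 for all x ∈ [2π/3, 5π/6]. Then there exist signs ε_1, …, ε_N ∈ {−1, +1} and a point x_0 ∈ [2π/3, 5π/6] such that ∑_{j=1}^N cos((λ_j + ε_j)x_0) ≤ −cN for an absolute constant c > 0 (e.g. c = 1/20). -/
open Real

theorem perturbed_cos_sum_negative (N : ℕ) (lam : Fin N → ℕ)
    (hmono : StrictMono lam) (hbig : ∀ j, 10 < lam j)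
    (hsmall : ∀ x ∈ Set.Icc (2*π/3) (5*π/6),
      |∑ j, Real.cos ((lam j : ℝ) * x)| ≤ (N : ℝ)/100) :
    ∃ ε : Fin N → ℤ, (∀ j, ε j = 1 ∨ ε j = -1) ∧
      ∃ x₀ ∈ Set.Icc (2*π/3) (5*π/6),
        ∑ j, Real.cos ((((lam j : ℤ) + ε j : ℤ) : ℝ) * x₀) ≤ -((1/20) * N) := by
  have hπ := Real.pi_pos
  set x₀ : ℝ := 2*π/3 with hx₀def
  have hmem : x₀ ∈ Set.Icc (2*π/3) (5*π/6) := ⟨le_refl _, by rw [hx₀def]; linarith⟩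
  set ε : Fin N → ℤ := fun j => if 0 ≤ Real.sin ((lam j : ℝ) * x₀) then 1 else -1 with hε
  have hεval : ∀ j, ε j = 1 ∨ ε j = -1 := by
    intro j; simp only [hε]; split <;> simp
  refine ⟨ε, hεval, x₀, hmem, ?_⟩
  have hs0 : (0:ℝ) ≤ Real.sqrt 3 := Real.sqrt_nonneg 3
  have hs : Real.sqrt 3 ^ 2 = 3 := Real.sq_sqrt (by norm_num)
  have hcosx₀ : Real.cos x₀ = -(1/2) := by
    have h : x₀ = π - π/3 := by rw [hx₀def]; ring
    rw [h, Real.cos_pi_sub, Real.cos_pi_div_three]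
  have hsinx₀ : Real.sin x₀ = Real.sqrt 3 / 2 := by
    have h : x₀ = π - π/3 := by rw [hx₀def]; ring
    rw [h, Real.sin_pi_sub, Real.sin_pi_div_three]
  have key : ∀ j : Fin N, Real.cos ((((lam j : ℤ) + ε j : ℤ) : ℝ) * x₀) ≤
      (Real.sqrt 3 - 2)/4 * Real.cos ((lam j : ℝ) * x₀) - Real.sqrt 3 / 4 := by
    intro j
    set c := Real.cos ((lam j : ℝ) * x₀) with hc
    set s := Real.sin ((lam j : ℝ) * x₀) with hsn
    have hdouble : Real.cos (2 * ((lam j : ℝ) * x₀)) = c := by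
      have h2 : 2 * ((lam j : ℝ) * x₀) = ((lam j : ℤ) : ℝ) * (2*π) - (lam j : ℝ) * x₀ := by
        rw [hx₀def]; push_cast; ring
      rw [h2, Real.cos_int_mul_two_pi_sub]
    have hsq : s ^ 2 = (1 - c) / 2 := by
      have := Real.cos_two_mul ((lam j : ℝ) * x₀)
      have hpy := Real.sin_sq_add_cos_sq ((lam j : ℝ) * x₀)
      rw [hdouble] at this
      nlinarith [this, hpy]
    have hsle : s ≤ 1 := Real.sin_le_one _
    have hsge : -1 ≤ s := Real.neg_one_le_sin _
    by_cases h : 0 ≤ s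
    · have hej : ε j = 1 := by simp only [hε]; rw [if_pos h]
      have hcast : ((((lam j : ℤ) + ε j : ℤ) : ℝ)) = (lam j : ℝ) + 1 := by
        rw [hej]; push_cast; ring
      rw [hcast, add_mul, one_mul, Real.cos_add, hcosx₀, hsinx₀, ← hc, ← hsn]
      have h1 : s - (1 - c)/2 ≥ 0 := by nlinarith [mul_nonneg h (by linarith : (0:ℝ) ≤ 1 - s)]
      nlinarith [mul_nonneg hs0 h1]
    · push_neg at h
      have hej : ε j = -1 := by simp only [hε]; rw [if_neg (not_le.mpr h)]
      have hcast : ((((lam j : ℤ) + ε j : ℤ) : ℝ)) = (lam j : ℝ) - 1 := by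
        rw [hej]; push_cast; ring
      rw [hcast, sub_mul, one_mul, Real.cos_sub, hcosx₀, hsinx₀, ← hc, ← hsn]
      have h1 : -s - (1 - c)/2 ≥ 0 := by
        nlinarith [mul_nonneg (by linarith : (0:ℝ) ≤ -s) (by linarith : (0:ℝ) ≤ 1 + s)]
      nlinarith [mul_nonneg hs0 h1]
  have hC := hsmall x₀ hmem
  set C := ∑ j, Real.cos ((lam j : ℝ) * x₀) with hCdef
  have hClo : -((N:ℝ)/100) ≤ C := (abs_le.mp hC).1
  calc ∑ j, Real.cos ((((lam j : ℤ) + ε j : ℤ) : ℝ) * x₀)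
      ≤ ∑ j, ((Real.sqrt 3 - 2)/4 * Real.cos ((lam j : ℝ) * x₀) - Real.sqrt 3 / 4) :=
        Finset.sum_le_sum (fun j _ => key j)
    _ = (Real.sqrt 3 - 2)/4 * C - Real.sqrt 3 / 4 * N := by
        rw [Finset.sum_sub_distrib, ← Finset.mul_sum, ← hCdef]
        simp [Finset.card_univ, mul_comm]
    _ ≤ -((1/20) * N) := by
        have hNn : (0:ℝ) ≤ (N:ℝ) := Nat.cast_nonneg N
        have hslt : Real.sqrt 3 ≤ 2 := by nlinarith
        have hsgt : (1.7:ℝ) ≤ Real.sqrt 3 := by nlinarith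
        nlinarith [mul_nonneg (sub_nonneg.mpr hslt) (by linarith : (0:ℝ) ≤ C + (N:ℝ)/100)]
end

section
/- Let λ_1 < ⋯ < λ_N be distinct positive integers with max_{0≤x≤2π} |∑_{j=1}^N sin(λ_j x)| = S. Then for any positive integer M, the number of indices j with λ_j ≤ M is at most C·S·(1 + log M) for an absolute constant C > 0. -/
/-!
Pair `f x = ∑ j, sin (λ_j x)` with the conjugate Dirichlet kernel `D_M x = ∑_{k=1}^M sin (k x)`.
By orthogonality of the sines on `[0, 2π]`, `∫₀^{2π} f D_M = π · #{j | λ_j ≤ M}`, while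
`|∫₀^{2π} f D_M| ≤ S ∫₀^{2π} |D_M|`. The closed form
`D_M x · sin (x/2) = sin (M x/2) sin ((M+1) x/2)` gives `|D_M x| ≤ min (M, π / x)` on `(0, π]`,
and with the symmetry `D_M (2π - x) = - D_M x` this yields `∫₀^{2π} |D_M| ≤ 2π (1 + log M)`;
hence the count is at most `2 S (1 + log M)`.
-/

open Real Finset intervalIntegral

noncomputable def conjDirichletKernel (M : ℕ) (x : ℝ) : ℝ :=
  ∑ k ∈ Icc 1 M, sin (k * x)

section conjDirichletKernel

variable (M : ℕ)

@[fun_prop]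
theorem continuous_conjDirichletKernel : Continuous (conjDirichletKernel M) := by
  unfold conjDirichletKernel
  fun_prop

theorem conjDirichletKernel_mul_sin_half (x : ℝ) :
    conjDirichletKernel M x * sin (x / 2) = sin (M * x / 2) * sin ((M + 1) * x / 2) := by
  induction M with
  | zero => simp [conjDirichletKernel]
  | succ M ih =>
    rw [conjDirichletKernel, sum_Icc_succ_top (by omega), add_mul, ← conjDirichletKernel, ih]
    push_cast
    rw [show (M : ℝ) * x / 2 = (M + 1) * (x / 2) - x / 2 by ring,
      show ((M : ℝ) + 1) * x / 2 = (M + 1) * (x / 2) by ring,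
      show ((M : ℝ) + 1 + 1) * x / 2 = (M + 1) * (x / 2) + x / 2 by ring,
      show ((M : ℝ) + 1) * x = 2 * ((M + 1) * (x / 2)) by ring,
      sin_sub, sin_add, sin_two_mul]
    ring

theorem conjDirichletKernel_two_pi_sub (x : ℝ) :
    conjDirichletKernel M (2 * π - x) = -conjDirichletKernel M x := by
  rw [conjDirichletKernel, conjDirichletKernel, ← sum_neg_distrib]
  refine sum_congr rfl fun k _ => ?_
  simp [mul_sub, sin_nat_mul_two_pi_sub]

theorem abs_conjDirichletKernel_le_natCast (x : ℝ) : |conjDirichletKernel M x| ≤ M :=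
  calc |conjDirichletKernel M x| ≤ ∑ k ∈ Icc 1 M, |sin (k * x)| := abs_sum_le_sum_abs _ _
    _ ≤ ∑ _k ∈ Icc 1 M, (1 : ℝ) := sum_le_sum fun k _ => abs_sin_le_one _
    _ = M := by simp

theorem abs_conjDirichletKernel_le_pi_div {x : ℝ} (hx₀ : 0 < x) (hxπ : x ≤ π) :
    |conjDirichletKernel M x| ≤ π / x := by
  have hsin_pos : 0 < sin (x / 2) := sin_pos_of_pos_of_lt_pi (by linarith) (by linarith)
  have hjordan : x / π ≤ sin (x / 2) := by
    simpa [field] using mul_le_sin (x := x / 2) (by positivity) (by linarith)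
  have hinv : |conjDirichletKernel M x| ≤ 1 / sin (x / 2) := by
    rw [le_div_iff₀ hsin_pos, ← abs_of_pos hsin_pos, ← abs_mul,
      conjDirichletKernel_mul_sin_half, abs_mul]
    exact mul_le_one₀ (abs_sin_le_one _) (abs_nonneg _) (abs_sin_le_one _)
  calc |conjDirichletKernel M x| ≤ 1 / sin (x / 2) := hinv
    _ ≤ 1 / (x / π) := one_div_le_one_div_of_le (by positivity) hjordan
    _ = π / x := one_div_div x π

theorem intervalIntegrable_abs_conjDirichletKernel (a b : ℝ) :
    IntervalIntegrable (fun x => |conjDirichletKernel M x|) MeasureTheory.volume a b :=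
  (continuous_conjDirichletKernel M).abs.intervalIntegrable a b

theorem integral_abs_conjDirichletKernel_two_pi :
    ∫ x in 0..2 * π, |conjDirichletKernel M x| = 2 * ∫ x in 0..π, |conjDirichletKernel M x| := by
  have hint := intervalIntegrable_abs_conjDirichletKernel M
  have hreflect :
      ∫ x in π..2 * π, |conjDirichletKernel M x| = ∫ x in 0..π, |conjDirichletKernel M x| := by
    have h := integral_comp_sub_left (a := 0) (b := π) (fun x => |conjDirichletKernel M x|) (2 * π)
    simp only [conjDirichletKernel_two_pi_sub, abs_neg, sub_zero, show 2 * π - π = π by ring] at h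
    exact h.symm
  rw [← integral_add_adjacent_intervals (hint 0 π) (hint π (2 * π)), hreflect, two_mul]

theorem integral_abs_conjDirichletKernel_le (hM : 0 < M) :
    ∫ x in 0..2 * π, |conjDirichletKernel M x| ≤ 2 * π * (1 + log M) := by
  have hM' : (0 : ℝ) < M := Nat.cast_pos.mpr hM
  set δ := π / M
  have hδ : 0 < δ := by positivity
  have hδπ : δ ≤ π := div_le_self pi_pos.le (Nat.one_le_cast.mpr hM)
  have hint := intervalIntegrable_abs_conjDirichletKernel M
  have hnear : ∫ x in 0..δ, |conjDirichletKernel M x| ≤ π := by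
    calc ∫ x in 0..δ, |conjDirichletKernel M x| ≤ ∫ _x in 0..δ, (M : ℝ) :=
          integral_mono_on hδ.le (hint 0 δ) intervalIntegrable_const
            fun x _ => abs_conjDirichletKernel_le_natCast M x
      _ = π := by simp [δ, hM'.ne']
  have hzero : (0 : ℝ) ∉ Set.uIcc δ π := by
    rw [Set.uIcc_of_le hδπ]; exact fun h => hδ.not_ge h.1
  have hfar : ∫ x in δ..π, |conjDirichletKernel M x| ≤ π * log M := by
    calc ∫ x in δ..π, |conjDirichletKernel M x| ≤ ∫ x in δ..π, π * (1 / x) :=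
          integral_mono_on hδπ (hint δ π)
            ((intervalIntegrable_one_div (fun x hx => ne_of_mem_of_not_mem hx hzero)
              continuousOn_id).const_mul π)
            fun x hx => by
              simpa [div_eq_mul_inv] using
                abs_conjDirichletKernel_le_pi_div M (hδ.trans_le hx.1) hx.2
      _ = π * log M := by
        rw [integral_const_mul, integral_one_div hzero, div_div_eq_mul_div,
          mul_div_cancel_left₀ _ pi_ne_zero]
  rw [integral_abs_conjDirichletKernel_two_pi,
    ← integral_add_adjacent_intervals (hint 0 δ) (hint δ π)]
  nlinarith [pi_pos]

end conjDirichletKernel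

theorem integral_cos_int_mul_eq_zero {k : ℤ} (hk : k ≠ 0) :
    ∫ x in 0..2 * π, cos (k * x) = 0 := by
  rw [integral_comp_mul_left cos (Int.cast_ne_zero.mpr hk), integral_cos]
  have hsin : sin (k * (2 * π)) = 0 := by simpa using sin_int_mul_two_pi_sub 0 k
  simp [hsin]

theorem integral_sin_nat_mul_mul_sin_nat_mul {m : ℕ} (hm : 0 < m) (n : ℕ) :
    ∫ x in 0..2 * π, sin (m * x) * sin (n * x) = if m = n then π else 0 := by
  have hprod (x : ℝ) : sin (m * x) * sin (n * x) =
      (cos (((m - n : ℤ) : ℝ) * x) - cos (((m + n : ℤ) : ℝ) * x)) / 2 := by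
    push_cast
    rw [sub_mul, add_mul, ← two_mul_sin_mul_sin]
    ring
  have hcos (k : ℤ) : IntervalIntegrable (fun x => cos (k * x)) MeasureTheory.volume 0 (2 * π) :=
    (by fun_prop : Continuous fun x : ℝ => cos (k * x)).intervalIntegrable _ _
  simp only [hprod, integral_div, integral_sub (hcos _) (hcos _),
    integral_cos_int_mul_eq_zero (by omega : (m + n : ℤ) ≠ 0)]
  split_ifs with hmn
  · simp [hmn]
  · simpa using integral_cos_int_mul_eq_zero (k := m - n) (by omega)

theorem integral_sin_nat_mul_mul_conjDirichletKernel {m : ℕ} (hm : 0 < m) (M : ℕ) :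
    ∫ x in 0..2 * π, sin (m * x) * conjDirichletKernel M x = if m ≤ M then π else 0 := by
  simp only [conjDirichletKernel, mul_sum]
  rw [integral_finsetSum (s := Icc 1 M) fun k _ => (by fun_prop : Continuous fun x : ℝ =>
    sin (m * x) * sin (k * x)).intervalIntegrable _ _]
  simp only [integral_sin_nat_mul_mul_sin_nat_mul hm, sum_ite_eq, mem_Icc]
  simp [Nat.one_le_iff_ne_zero.mpr hm.ne']

theorem integral_sum_sin_mul_conjDirichletKernel {ι : Type*} (s : Finset ι) (lam : ι → ℕ)
    (hlam : ∀ j ∈ s, 0 < lam j) (M : ℕ) :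
    ∫ x in 0..2 * π, (∑ j ∈ s, sin (lam j * x)) * conjDirichletKernel M x =
      π * #{j ∈ s | lam j ≤ M} := by
  simp only [sum_mul]
  rw [integral_finsetSum fun j _ => (by fun_prop : Continuous fun x : ℝ =>
    sin (lam j * x) * conjDirichletKernel M x).intervalIntegrable _ _]
  rw [sum_congr rfl fun j hj => integral_sin_nat_mul_mul_conjDirichletKernel (hlam j hj) M,
    ← sum_filter, sum_const, nsmul_eq_mul, mul_comm]

theorem abs_integral_mul_le {f g : ℝ → ℝ} {a b S : ℝ} (hab : a ≤ b)
    (hg : IntervalIntegrable g MeasureTheory.volume a b) (hf : ∀ x ∈ Set.Icc a b, |f x| ≤ S) :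
    |∫ x in a..b, f x * g x| ≤ S * ∫ x in a..b, |g x| := by
  rw [← Real.norm_eq_abs, ← intervalIntegral.integral_const_mul]
  refine intervalIntegral.norm_integral_le_of_norm_le hab
    (Filter.Eventually.of_forall fun x hx => ?_) (hg.abs.const_mul S)
  rw [Real.norm_eq_abs, abs_mul]
  exact mul_le_mul_of_nonneg_right (hf x (Set.Ioc_subset_Icc_self hx)) (abs_nonneg _)

theorem count_small_frequencies_bound :
    ∃ C > (0:ℝ), ∀ (N : ℕ) (lam : Fin N → ℕ), StrictMono lam → (∀ j, 0 < lam j) →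
      ∀ S : ℝ, (∀ x ∈ Set.Icc (0:ℝ) (2*π),
          |∑ j, Real.sin ((lam j : ℝ) * x)| ≤ S) →
        ∀ M : ℕ, 0 < M →
          ((Finset.univ.filter (fun j => lam j ≤ M)).card : ℝ) ≤
            C * S * (1 + Real.log M) := by
  refine ⟨2, two_pos, fun N lam _ hlam S hS M hM => ?_⟩
  have hS₀ : 0 ≤ S := (abs_nonneg _).trans (hS 0 ⟨le_rfl, by positivity⟩)
  have hpair := abs_integral_mul_le (by positivity)
    ((continuous_conjDirichletKernel M).intervalIntegrable _ _) hS
  rw [integral_sum_sin_mul_conjDirichletKernel _ _ (fun j _ => hlam j),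
    abs_of_nonneg (by positivity)] at hpair
  have hL1 := mul_le_mul_of_nonneg_left (integral_abs_conjDirichletKernel_le M hM) hS₀
  have : π * #{j | lam j ≤ M} ≤ π * (2 * S * (1 + log M)) := by linarith
  exact le_of_mul_le_mul_left this pi_pos
end

section
/- Let λ_1 < ⋯ < λ_N be positive integers greater than 10 and suppose the sum ∑_{j=1}^N sin(λ_j x) satisfies |∑_{j=1}^N sin(λ_j x)| ≤ N/100 for all x ∈ [π/4, π/2]. Then there exist signs ε_j ∈ {−1,+1} and x_0 ∈ [π/4, π/2] with ∑_{j=1}^N sin((λ_j + ε_j)x_0) ≥ cN for an absolute constant c > 0 (e.g. c = 1/20). -/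
open Real

lemma sin_mul_cos_abs_le (a : ℝ) : |sin a * cos a| ≤ 1/2 := by
  rw [abs_le]
  constructor <;>
    nlinarith [sq_nonneg (sin a - cos a), sq_nonneg (sin a + cos a), sin_sq_add_cos_sq a]

lemma integ_sin_sq_bound (c : ℝ) (hc : 11 ≤ c) :
    ∫ x in (π/4)..(π/2), sin (c * x) ^ 2 ≤ π/8 + 1/22 := by
  have hc0 : c ≠ 0 := by linarith
  rw [intervalIntegral.integral_comp_mul_left (fun x => sin x ^ 2) hc0, integral_sin_sq]
  have hA := sin_mul_cos_abs_le (c * (π/4))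
  have hB := sin_mul_cos_abs_le (c * (π/2))
  rw [abs_le] at hA hB
  have htc : c⁻¹ * c = 1 := inv_mul_cancel₀ hc0
  have htpos : 0 < c⁻¹ := by positivity
  have htle : c⁻¹ ≤ 1/11 := by
    have := inv_anti₀ (by norm_num : (0:ℝ) < 11) hc
    norm_num at this ⊢
    linarith
  simp only [smul_eq_mul]
  calc c⁻¹ * ((sin (c*(π/4)) * cos (c*(π/4)) - sin (c*(π/2)) * cos (c*(π/2))
          + c * (π/2) - c * (π/4)) / 2)
      = π/8 + (c⁻¹ * (sin (c*(π/4)) * cos (c*(π/4)))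
          - c⁻¹ * (sin (c*(π/2)) * cos (c*(π/2)))) / 2 := by
        field_simp
        ring
    _ ≤ π/8 + 1/22 := by
        nlinarith [mul_le_mul_of_nonneg_left hA.2 htpos.le,
          mul_le_mul_of_nonneg_left hB.1 htpos.le]

lemma exists_small_sin_sq (N : ℕ) (hN : 1 ≤ N) (lam : Fin N → ℕ)
    (hbig : ∀ j, 10 < lam j) :
    ∃ x₀ ∈ Set.Icc (π/4) (π/2),
      ∑ j, Real.sin ((lam j : ℝ) * x₀) ^ 2 ≤ 3/5 * N := by
  by_contra h
  push_neg at h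
  have hab : (π/4 : ℝ) ≤ π/2 := by linarith [pi_pos]
  have hcont : ∀ j : Fin N, Continuous fun x : ℝ => Real.sin ((lam j : ℝ) * x) ^ 2 := by
    intro j; continuity
  have hcontF : Continuous fun x : ℝ => ∑ j, Real.sin ((lam j : ℝ) * x) ^ 2 :=
    continuous_finset_sum _ fun j _ => hcont j
  have h1 : (π/2 - π/4) * (3/5 * (N : ℝ)) ≤
      ∫ x in (π/4)..(π/2), ∑ j, Real.sin ((lam j : ℝ) * x) ^ 2 := by
    have := intervalIntegral.integral_mono_on (μ := MeasureTheory.volume) (f := fun _ : ℝ => 3/5 * (N : ℝ))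
      (g := fun x => ∑ j, Real.sin ((lam j : ℝ) * x) ^ 2) hab
      ((continuous_const).intervalIntegrable _ _) (hcontF.intervalIntegrable _ _)
      (fun x hx => (h x hx).le)
    have e : (π/2 - π/4) * (3/5 * (N : ℝ)) = 3 / 5 * ((π / 2 - π / 4) * N) := by ring
    rw [e]; simpa using this
  have h2 : (∫ x in (π/4)..(π/2), ∑ j, Real.sin ((lam j : ℝ) * x) ^ 2)
      ≤ (N : ℝ) * (π/8 + 1/22) := by
    rw [intervalIntegral.integral_finset_sum (fun j _ => (hcont j).intervalIntegrable _ _)]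
    calc ∑ j, ∫ x in (π/4)..(π/2), Real.sin ((lam j : ℝ) * x) ^ 2
        ≤ ∑ _j : Fin N, (π/8 + 1/22) := by
          refine Finset.sum_le_sum fun j _ => integ_sin_sq_bound _ ?_
          have := hbig j
          exact_mod_cast Nat.succ_le_of_lt this
      _ = (N : ℝ) * (π/8 + 1/22) := by simp; ring
  have hN' : (1 : ℝ) ≤ N := by exact_mod_cast hN
  nlinarith [Real.pi_gt_three]

theorem perturbed_sin_sum_large_on_interval (N : ℕ) (lam : Fin N → ℕ)
    (hmono : StrictMono lam) (hbig : ∀ j, 10 < lam j)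
    (hsmall : ∀ x ∈ Set.Icc (π/4) (π/2),
      |∑ j, Real.sin ((lam j : ℝ) * x)| ≤ (N : ℝ)/100) :
    ∃ ε : Fin N → ℤ, (∀ j, ε j = 1 ∨ ε j = -1) ∧
      ∃ x₀ ∈ Set.Icc (π/4) (π/2),
        ∑ j, Real.sin ((((lam j : ℤ) + ε j : ℤ) : ℝ) * x₀) ≥ (1/20) * N := by
  have hpi := Real.pi_pos
  rcases Nat.eq_zero_or_pos N with hN0 | hN
  · subst hN0
    refine ⟨fun _ => 1, fun j => Or.inl rfl, π/4, ⟨le_refl _, by linarith⟩, by simp⟩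
  obtain ⟨x₀, hx₀, hsq⟩ := exists_small_sin_sq N hN lam hbig
  set ε : Fin N → ℤ := fun j => if 0 ≤ Real.cos ((lam j : ℝ) * x₀) then 1 else -1 with hε
  have hεval : ∀ j, ε j = 1 ∨ ε j = -1 := by
    intro j; by_cases h : 0 ≤ Real.cos ((lam j : ℝ) * x₀) <;> simp [hε, h]
  refine ⟨ε, hεval, x₀, hx₀, ?_⟩
  have hterm : ∀ j, Real.sin ((((lam j : ℤ) + ε j : ℤ) : ℝ) * x₀)
      = Real.sin ((lam j : ℝ) * x₀) * Real.cos x₀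
        + |Real.cos ((lam j : ℝ) * x₀)| * Real.sin x₀ := by
    intro j
    by_cases h : 0 ≤ Real.cos ((lam j : ℝ) * x₀)
    · simp only [hε, if_pos h]
      push_cast
      rw [add_mul, one_mul, Real.sin_add, abs_of_nonneg h]
    · simp only [hε, if_neg h]
      push_cast
      rw [show ((lam j : ℝ) + -1) * x₀ = (lam j : ℝ) * x₀ - x₀ by ring, Real.sin_sub,
        abs_of_neg (lt_of_not_ge h)]
      ring
  have hsum : ∑ j, Real.sin ((((lam j : ℤ) + ε j : ℤ) : ℝ) * x₀)
      = Real.cos x₀ * (∑ j, Real.sin ((lam j : ℝ) * x₀))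
        + Real.sin x₀ * (∑ j, |Real.cos ((lam j : ℝ) * x₀)|) := by
    rw [Finset.mul_sum, Finset.mul_sum, ← Finset.sum_add_distrib]
    exact Finset.sum_congr rfl fun j _ => by rw [hterm j]; ring
  rw [hsum]
  obtain ⟨hx₁, hx₂⟩ := hx₀
  have hS := hsmall x₀ ⟨hx₁, hx₂⟩
  have hcos0 : 0 ≤ Real.cos x₀ :=
    Real.cos_nonneg_of_mem_Icc ⟨by linarith, hx₂⟩
  have hcos1 : Real.cos x₀ ≤ 1 := Real.cos_le_one x₀
  have hsin : (7:ℝ)/10 ≤ Real.sin x₀ := by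
    have hmono' : Real.sin (π/4) ≤ Real.sin x₀ :=
      Real.strictMonoOn_sin.monotoneOn ⟨by linarith, by linarith⟩ ⟨by linarith, hx₂⟩ hx₁
    rw [Real.sin_pi_div_four] at hmono'
    nlinarith [Real.sq_sqrt (by norm_num : (2:ℝ) ≥ 0).le, Real.sqrt_nonneg 2]
  have hT : (2:ℝ)/5 * N ≤ ∑ j, |Real.cos ((lam j : ℝ) * x₀)| := by
    have hle : ∀ j : Fin N, 1 - Real.sin ((lam j : ℝ) * x₀) ^ 2
        ≤ |Real.cos ((lam j : ℝ) * x₀)| := by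
      intro j
      have h1 : Real.cos ((lam j : ℝ) * x₀) ^ 2 = 1 - Real.sin ((lam j : ℝ) * x₀) ^ 2 := by
        nlinarith [Real.sin_sq_add_cos_sq ((lam j : ℝ) * x₀)]
      nlinarith [abs_nonneg (Real.cos ((lam j : ℝ) * x₀)),
        sq_abs (Real.cos ((lam j : ℝ) * x₀)),
        abs_cos_le_one ((lam j : ℝ) * x₀)]
    calc (2:ℝ)/5 * N = ∑ _j : Fin N, (1:ℝ) - 3/5 * N := by
          simp [Finset.sum_const]; ring
      _ ≤ ∑ j, (1 - Real.sin ((lam j : ℝ) * x₀) ^ 2) := by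
          rw [Finset.sum_sub_distrib]
          simp only [Finset.sum_const, Finset.card_univ, Fintype.card_fin, nsmul_eq_mul, mul_one]
          linarith
      _ ≤ ∑ j, |Real.cos ((lam j : ℝ) * x₀)| := Finset.sum_le_sum fun j _ => hle j
  have habs := abs_le.mp hS
  have hTnn : (0:ℝ) ≤ ∑ j, |Real.cos ((lam j : ℝ) * x₀)| :=
    Finset.sum_nonneg fun j _ => abs_nonneg _
  have hNnn : (0:ℝ) ≤ N := Nat.cast_nonneg N
  nlinarith [habs.1, habs.2, mul_nonneg hcos0 hTnn,
    mul_le_mul_of_nonneg_left habs.1 hcos0]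
end
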